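/- Let (v̄, w̄⁺, w̄⁻, b̄, ξ̄) be LP-feasible with objective value z = Obj(v̄, w̄⁺, w̄⁻, b̄, ξ̄), and suppose every LP-feasible tuple has objective value at least z. Let ᾱ : Fin m → ℝ satisfy ᾱ i ≥ 0 for all i and L(t; ᾱ) ≥ z for every relaxed-feasible tuple t. Let j0 : Fin n with w̄⁺ j0 + w̄⁻ j0 = 0, and assume 1 - ∑ i, ᾱ i * y i * x i j0 > 0. Let UB : ℝ. Then every FS-SVM-feasible tuple (v, w⁺, w⁻, b, ξ) with Obj(v, w⁺, w⁻, b, ξ) ≤ UB and (∑ j, v̄ j) + (w⁺ j0) / (u j0) ≤ B satisfies w⁺ j0 ≤ (UB - z) / (1 - ∑ i, ᾱ i * y i * x i j0). -/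

import Mathlib

/-!
Zeroing the coordinate `w⁺ j0` of an FS-SVM-feasible point keeps it relaxed-feasible and
changes the Lagrangian by exactly `-w⁺ j0 * (1 - ∑ i, ᾱ i * y i * x i j0)`. As `ᾱ ≥ 0`, the
Lagrangian is at most the objective wherever the margin constraints hold, so
`z ≤ L(zeroed point) = L - w⁺ j0 * (1 - ∑ …) ≤ UB - w⁺ j0 * (1 - ∑ …)`.
-/

open Finset

/-- Objective of FS-SVM: sum of hyperplane coefficient magnitudes plus penalized deviations. -/
noncomputable def Obj {m n : ℕ} (C : ℝ) (v wp wm : Fin n → ℝ) (b : ℝ) (ξ : Fin m → ℝ) : ℝ :=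
  (∑ j, (wp j + wm j)) + C * ∑ i, ξ i

/-- Feasibility for the LP relaxation LP-FS-SVM. -/
def LPFeasible {m n : ℕ} (x : Fin m → Fin n → ℝ) (y : Fin m → ℝ) (B : ℝ)
    (u l : Fin n → ℝ) (v wp wm : Fin n → ℝ) (b : ℝ) (ξ : Fin m → ℝ) : Prop :=
  (∀ i, y i * ((∑ j, (wp j - wm j) * x i j) + b) ≥ 1 - ξ i) ∧
  (∑ j, v j) ≤ B ∧
  (∀ j, 0 ≤ wp j ∧ wp j ≤ u j * v j ∧ 0 ≤ wm j ∧ wm j ≤ -(l j) * v j) ∧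
  (∀ i, 0 ≤ ξ i) ∧
  (∀ j, 0 ≤ v j ∧ v j ≤ 1)

/-- Feasibility for the mixed-integer problem FS-SVM. -/
def FSFeasible {m n : ℕ} (x : Fin m → Fin n → ℝ) (y : Fin m → ℝ) (B : ℝ)
    (u l : Fin n → ℝ) (v wp wm : Fin n → ℝ) (b : ℝ) (ξ : Fin m → ℝ) : Prop :=
  (∀ i, y i * ((∑ j, (wp j - wm j) * x i j) + b) ≥ 1 - ξ i) ∧
  (∑ j, v j) ≤ B ∧
  (∀ j, 0 ≤ wp j ∧ wp j ≤ u j * v j ∧ 0 ≤ wm j ∧ wm j ≤ -(l j) * v j) ∧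
  (∀ i, 0 ≤ ξ i) ∧
  (∀ j, v j = 0 ∨ v j = 1)

/-- Relaxed feasibility: all LP constraints except the soft-margin constraints (1). -/
def RelaxedFeasible {m n : ℕ} (B : ℝ) (u l : Fin n → ℝ)
    (v wp wm : Fin n → ℝ) (ξ : Fin m → ℝ) : Prop :=
  (∑ j, v j) ≤ B ∧
  (∀ j, 0 ≤ wp j ∧ wp j ≤ u j * v j ∧ 0 ≤ wm j ∧ wm j ≤ -(l j) * v j) ∧
  (∀ i, 0 ≤ ξ i) ∧
  (∀ j, 0 ≤ v j ∧ v j ≤ 1)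

/-- Lagrangian obtained by dualizing the soft-margin constraints (1). -/
noncomputable def Lag {m n : ℕ} (x : Fin m → Fin n → ℝ) (y : Fin m → ℝ) (C : ℝ)
    (v wp wm : Fin n → ℝ) (b : ℝ) (ξ : Fin m → ℝ) (α : Fin m → ℝ) : ℝ :=
  Obj C v wp wm b ξ +
    ∑ i, α i * (1 - ξ i - y i * ((∑ j, (wp j - wm j) * x i j) + b))

section

variable {m n : ℕ}

lemma Lag_update_wp [DecidableEq (Fin n)] (x : Fin m → Fin n → ℝ) (y : Fin m → ℝ) (C : ℝ)
    (v wp wm : Fin n → ℝ) (b : ℝ) (ξ α : Fin m → ℝ) (j : Fin n) (c : ℝ) :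
    Lag x y C v (Function.update wp j c) wm b ξ α
      = Lag x y C v wp wm b ξ α + (c - wp j) * (1 - ∑ i, α i * y i * x i j) := by
  have hupdate : ∀ k, Function.update wp j c k = wp k + if k = j then c - wp j else 0 := by
    intro k; by_cases hk : k = j <;> simp [hk]
  have hobj : ∑ k, (Function.update wp j c k + wm k) = ∑ k, (wp k + wm k) + (c - wp j) := by
    simp only [hupdate, add_right_comm _ (ite _ _ _), sum_add_distrib, sum_ite_eq', mem_univ,
      if_true]
  have hmargin : ∀ i, ∑ k, (Function.update wp j c k - wm k) * x i k
      = ∑ k, (wp k - wm k) * x i k + (c - wp j) * x i j := by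
    intro i
    simp only [hupdate, add_sub_right_comm _ (ite _ _ _), add_mul, sum_add_distrib, ite_mul,
      zero_mul, sum_ite_eq', mem_univ, if_true]
  have hpenalty : ∀ i,
      α i * (1 - ξ i - y i * ((∑ k, (Function.update wp j c k - wm k) * x i k) + b))
      = α i * (1 - ξ i - y i * ((∑ k, (wp k - wm k) * x i k) + b))
        - (c - wp j) * (α i * y i * x i j) := by
    intro i; rw [hmargin]; ring
  simp only [Lag, Obj, hobj, hpenalty, sum_sub_distrib, ← mul_sum]
  ring

lemma Lag_le_Obj (x : Fin m → Fin n → ℝ) (y : Fin m → ℝ) (C : ℝ) (v wp wm : Fin n → ℝ) (b : ℝ)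
    (ξ α : Fin m → ℝ) (hα : ∀ i, 0 ≤ α i)
    (hmargin : ∀ i, y i * ((∑ j, (wp j - wm j) * x i j) + b) ≥ 1 - ξ i) :
    Lag x y C v wp wm b ξ α ≤ Obj C v wp wm b ξ := by
  have hpenalty : ∑ i, α i * (1 - ξ i - y i * ((∑ j, (wp j - wm j) * x i j) + b)) ≤ 0 :=
    sum_nonpos fun i _ => mul_nonpos_of_nonneg_of_nonpos (hα i) (by linarith [hmargin i])
  simp only [Lag]
  linarith

lemma FSFeasible.relaxedFeasible {x : Fin m → Fin n → ℝ} {y : Fin m → ℝ} {B : ℝ}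
    {u l v wp wm : Fin n → ℝ} {b : ℝ} {ξ : Fin m → ℝ}
    (h : FSFeasible x y B u l v wp wm b ξ) : RelaxedFeasible B u l v wp wm ξ := by
  obtain ⟨-, hbudget, hbounds, hξ, hbinary⟩ := h
  refine ⟨hbudget, hbounds, hξ, fun j => ?_⟩
  rcases hbinary j with hv | hv <;> norm_num [hv]

lemma RelaxedFeasible.update_wp_zero [DecidableEq (Fin n)] {B : ℝ} {u l v wp wm : Fin n → ℝ}
    {ξ : Fin m → ℝ} (h : RelaxedFeasible B u l v wp wm ξ) (j : Fin n) :
    RelaxedFeasible B u l v (Function.update wp j 0) wm ξ := by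
  obtain ⟨hbudget, hbounds, hξ, hv⟩ := h
  refine ⟨hbudget, fun k => ?_, hξ, hv⟩
  obtain ⟨hwp_nonneg, hwp_le, hwm⟩ := hbounds k
  by_cases hk : k = j
  · subst hk
    rw [Function.update_self]
    exact ⟨le_rfl, hwp_nonneg.trans hwp_le, hwm⟩
  · rw [Function.update_of_ne hk]
    exact ⟨hwp_nonneg, hwp_le, hwm⟩

end

theorem stmt2_general
    (m n : ℕ) (x : Fin m → Fin n → ℝ) (y : Fin m → ℝ)
    (C : ℝ) (B : ℝ) (u l : Fin n → ℝ)
    (vb : Fin n → ℝ)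
    (z : ℝ)
    (αb : Fin m → ℝ) (hα : ∀ i, 0 ≤ αb i)
    (hdual : ∀ (v wp wm : Fin n → ℝ) (b : ℝ) (ξ : Fin m → ℝ),
      RelaxedFeasible B u l v wp wm ξ → Lag x y C v wp wm b ξ αb ≥ z)
    (j0 : Fin n)
    (hpos : 0 < 1 - ∑ i, αb i * y i * x i j0)
    (UB : ℝ) :
    ∀ (v wp wm : Fin n → ℝ) (b : ℝ) (ξ : Fin m → ℝ),
      FSFeasible x y B u l v wp wm b ξ →
      Obj C v wp wm b ξ ≤ UB →
      (∑ j, vb j) + wp j0 / u j0 ≤ B →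
      wp j0 ≤ (UB - z) / (1 - ∑ i, αb i * y i * x i j0) := by
  intro v wp wm b ξ hfs hUB _
  have hzeroed : z ≤ Lag x y C v wp wm b ξ αb - wp j0 * (1 - ∑ i, αb i * y i * x i j0) := by
    have hLag_zeroed := hdual v _ wm b ξ (hfs.relaxedFeasible.update_wp_zero j0)
    rw [Lag_update_wp] at hLag_zeroed
    linarith
  have hLag := Lag_le_Obj x y C v wp wm b ξ αb hα hfs.1
  rw [le_div_iff₀ hpos]
  linarith

theorem stmt2
    (m n : ℕ) (x : Fin m → Fin n → ℝ) (y : Fin m → ℝ)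
    (hy : ∀ i, y i = 1 ∨ y i = -1)
    (C : ℝ) (hC : 0 < C) (B : ℝ) (u l : Fin n → ℝ)
    (hu : ∀ j, 0 < u j) (hl : ∀ j, l j < 0)
    (vb wpb wmb : Fin n → ℝ) (bb : ℝ) (ξb : Fin m → ℝ)
    (hfeas : LPFeasible x y B u l vb wpb wmb bb ξb)
    (z : ℝ) (hz : z = Obj C vb wpb wmb bb ξb)
    (hopt : ∀ (v wp wm : Fin n → ℝ) (b : ℝ) (ξ : Fin m → ℝ),
      LPFeasible x y B u l v wp wm b ξ → Obj C v wp wm b ξ ≥ z)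
    (αb : Fin m → ℝ) (hα : ∀ i, 0 ≤ αb i)
    (hdual : ∀ (v wp wm : Fin n → ℝ) (b : ℝ) (ξ : Fin m → ℝ),
      RelaxedFeasible B u l v wp wm ξ → Lag x y C v wp wm b ξ αb ≥ z)
    (j0 : Fin n) (hj0 : wpb j0 + wmb j0 = 0)
    (hpos : 0 < 1 - ∑ i, αb i * y i * x i j0)
    (UB : ℝ) :
    ∀ (v wp wm : Fin n → ℝ) (b : ℝ) (ξ : Fin m → ℝ),
      FSFeasible x y B u l v wp wm b ξ →
      Obj C v wp wm b ξ ≤ UB →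
      (∑ j, vb j) + wp j0 / u j0 ≤ B →
      wp j0 ≤ (UB - z) / (1 - ∑ i, αb i * y i * x i j0) :=
  stmt2_general m n x y C B u l vb z αb hα hdual j0 hpos UB
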